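/- For any pmf P_{X,Y,Z,U,V} on finite alphabets satisfying the Markov chains X−(U,V)−Y and (X,Y,U)−V−Z, one has I(X;U,V) ≥ I(X;Y,Z) and I(X;V) ≥ I(X;Z). Consequently, the choice (U,V)=(Y,Z) simultaneously minimizes both communication-rate expressions over D, yielding minimum rates R1 = I(X;Y,Z) and R2 = I(X;Z). -/

import Mathlib

/-!
Both inequalities are Shannon-type. A Markov chain `A − W − B` makes `I(A;B|W)` vanish, and
`I(A;B|W) ≥ 0` is Gibbs' inequality for the law of `(A, B, W)` against `P_{A|W} P_{B|W} P_W`.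
By the chain rule,
`I(X;Y,Z|U,V) = I(X;Y|U,V) + I(X;Z|Y,U,V) ≤ 0 + I(X,Y,U;Z|V) = 0` and
`I(X;Z|V) ≤ I(X,Y,U;Z|V) = 0`, and `I(X;B|A) = 0` forces `I(X;B) ≤ I(X;A)`.
The choice `(U,V) = (Y,Z)` is the pushforward of `Q` along the diagonal embedding, so every law
it induces is a law of `Q`.
-/

open scoped BigOperators
open Finset Filter

noncomputable section

/-- `p` is a probability mass function on the finite type `α`. -/
def IsPmf {α : Type} [Fintype α] (p : α → ℝ) : Prop :=
  (∀ a, 0 ≤ p a) ∧ ∑ a, p a = 1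

/-- Total variation distance `‖p − q‖_TV = (1/2) Σ |p − q|`. -/
def TV {α : Type} [Fintype α] (p q : α → ℝ) : ℝ :=
  (∑ a, |p a - q a|) / 2

/-- The distribution (law) of the random variable `f` when the underlying
probability mass function is `p`. -/
def lawOf {Ω α : Type} [Fintype Ω] [DecidableEq α]
    (p : Ω → ℝ) (f : Ω → α) : α → ℝ :=
  fun a => ∑ ω, if f ω = a then p ω else 0

/-- Shannon entropy (base 2) of a pmf on a finite type. -/
def H2 {α : Type} [Fintype α] (p : α → ℝ) : ℝ :=
  -∑ a, p a * Real.logb 2 (p a)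

/-- Entropy `H(X)` of a random variable `X` under the pmf `p`. -/
def ent {Ω α : Type} [Fintype Ω] [Fintype α] [DecidableEq α]
    (p : Ω → ℝ) (X : Ω → α) : ℝ :=
  H2 (lawOf p X)

/-- Mutual information `I(X;Y)` under the pmf `p`. -/
def mi {Ω α β : Type} [Fintype Ω] [Fintype α] [Fintype β]
    [DecidableEq α] [DecidableEq β]
    (p : Ω → ℝ) (X : Ω → α) (Y : Ω → β) : ℝ :=
  ent p X + ent p Y - ent p (fun ω => (X ω, Y ω))

/-- Conditional mutual information `I(X;Y|W)` under the pmf `p`. -/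
def cmi {Ω α β γ : Type} [Fintype Ω] [Fintype α] [Fintype β] [Fintype γ]
    [DecidableEq α] [DecidableEq β] [DecidableEq γ]
    (p : Ω → ℝ) (X : Ω → α) (Y : Ω → β) (W : Ω → γ) : ℝ :=
  ent p (fun ω => (X ω, W ω)) + ent p (fun ω => (Y ω, W ω))
    - ent p (fun ω => (X ω, Y ω, W ω)) - ent p W

/-- `X` and `Y` are conditionally independent given `W` under `p`
(the Markov chain `X − W − Y`). -/
def CondIndep {Ω α β γ : Type} [Fintype Ω] [Fintype α] [Fintype β] [Fintype γ]
    [DecidableEq α] [DecidableEq β] [DecidableEq γ]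
    (p : Ω → ℝ) (X : Ω → α) (Y : Ω → β) (W : Ω → γ) : Prop :=
  ∀ x y w,
    lawOf p (fun ω => (X ω, Y ω, W ω)) (x, y, w) * lawOf p W w
      = lawOf p (fun ω => (X ω, W ω)) (x, w) * lawOf p (fun ω => (Y ω, W ω)) (y, w)

/-- `X` and `Y` are independent under `p`. -/
def IndepRV {Ω α β : Type} [Fintype Ω] [Fintype α] [Fintype β]
    [DecidableEq α] [DecidableEq β]
    (p : Ω → ℝ) (X : Ω → α) (Y : Ω → β) : Prop :=
  ∀ a b, lawOf p (fun ω => (X ω, Y ω)) (a, b) = lawOf p X a * lawOf p Y b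

open Function Real

section LawOf

variable {Ω Ω' α β γ : Type} [Fintype Ω] [DecidableEq α] [DecidableEq β] [DecidableEq γ]
  {p : Ω → ℝ}

lemma lawOf_nonneg (hp : ∀ ω, 0 ≤ p ω) (F : Ω → α) (a : α) : 0 ≤ lawOf p F a :=
  Finset.sum_nonneg fun ω _ => ite_nonneg (hp ω) le_rfl

lemma sum_lawOf_mul [Fintype α] (p : Ω → ℝ) (F : Ω → α) (φ : α → ℝ) :
    ∑ a, lawOf p F a * φ a = ∑ ω, p ω * φ (F ω) := by
  simp only [lawOf, Finset.sum_mul, ite_mul, zero_mul]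
  rw [Finset.sum_comm]
  simp

lemma sum_lawOf [Fintype α] (p : Ω → ℝ) (F : Ω → α) : ∑ a, lawOf p F a = ∑ ω, p ω := by
  simpa using sum_lawOf_mul p F 1

lemma IsPmf.lawOf [Fintype α] (hp : IsPmf p) (F : Ω → α) : IsPmf (lawOf p F) :=
  ⟨lawOf_nonneg hp.1 F, (sum_lawOf p F).trans hp.2⟩

lemma sum_lawOf_pair_left [Fintype α] (p : Ω → ℝ) (A : Ω → α) (B : Ω → β) (b : β) :
    ∑ a, lawOf p (fun ω => (A ω, B ω)) (a, b) = lawOf p B b := by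
  simp only [lawOf, Prod.mk.injEq, ite_and]
  rw [Finset.sum_comm]
  simp

lemma lawOf_le_lawOf_comp (hp : ∀ ω, 0 ≤ p ω) (F : Ω → α) (g : α → β) (a : α) :
    lawOf p F a ≤ lawOf p (fun ω => g (F ω)) (g a) :=
  Finset.sum_le_sum fun ω _ => by
    by_cases h : F ω = a
    · simp [h]
    · simp only [h, if_false]; exact ite_nonneg (hp ω) le_rfl

lemma lawOf_comp_pos (hp : ∀ ω, 0 ≤ p ω) {F : Ω → α} (g : α → β) {a : α}
    (h : 0 < lawOf p F a) : 0 < lawOf p (fun ω => g (F ω)) (g a) :=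
  h.trans_le (lawOf_le_lawOf_comp hp F g a)

lemma lawOf_comp_of_injective (p : Ω → ℝ) (F : Ω → α) {g : α → β} (hg : Injective g)
    (a : α) : lawOf p (fun ω => g (F ω)) (g a) = lawOf p F a := by
  simp only [lawOf, hg.eq_iff]

lemma lawOf_lawOf [Fintype Ω'] [DecidableEq Ω'] (p : Ω → ℝ) (e : Ω → Ω') (F : Ω' → α) :
    lawOf (lawOf p e) F = lawOf p (fun ω => F (e ω)) := by
  funext a
  calc (∑ ω', if F ω' = a then lawOf p e ω' else 0)
      = ∑ ω', lawOf p e ω' * if F ω' = a then 1 else 0 := by simp only [mul_boole]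
    _ = ∑ ω, p ω * if F (e ω) = a then 1 else 0 := sum_lawOf_mul p e _
    _ = lawOf p (fun ω => F (e ω)) a := by simp only [mul_boole, lawOf]

lemma lawOf_eq_zero_of_forall_ne (p : Ω → ℝ) {F : Ω → α} {a : α} (h : ∀ ω, F ω ≠ a) :
    lawOf p F a = 0 :=
  Finset.sum_eq_zero fun ω _ => if_neg (h ω)

lemma lawOf_apply_of_injective [DecidableEq Ω'] (p : Ω → ℝ) {e : Ω → Ω'} (he : Injective e)
    (ω : Ω) : lawOf p e (e ω) = p ω := by
  classical
  simp [lawOf, he.eq_iff]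

lemma eq_lawOf_of_injective [DecidableEq Ω'] {e : Ω → Ω'} (he : Injective e)
    {q : Ω' → ℝ} (hq : ∀ ω, q (e ω) = p ω) (hq₀ : ∀ ω', ω' ∉ Set.range e → q ω' = 0) :
    q = lawOf p e := by
  funext ω'
  by_cases h : ω' ∈ Set.range e
  · obtain ⟨ω, rfl⟩ := h
    rw [hq, lawOf_apply_of_injective p he]
  · rw [hq₀ ω' h, lawOf_eq_zero_of_forall_ne p fun ω hω => h ⟨ω, hω⟩]

/-- The law `P_{X|W} P_{Y|W} P_W` that `(X, Y, W)` would have if `X − W − Y` held. -/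
def condProdLaw (p : Ω → ℝ) (X : Ω → α) (Y : Ω → β) (W : Ω → γ) (t : α × β × γ) : ℝ :=
  lawOf p (fun ω => (X ω, W ω)) (t.1, t.2.2) * lawOf p (fun ω => (Y ω, W ω)) (t.2.1, t.2.2)
    / lawOf p W t.2.2

lemma condProdLaw_nonneg (hp : ∀ ω, 0 ≤ p ω) (X : Ω → α) (Y : Ω → β) (W : Ω → γ)
    (t : α × β × γ) : 0 ≤ condProdLaw p X Y W t :=
  div_nonneg (mul_nonneg (lawOf_nonneg hp _ _) (lawOf_nonneg hp _ _)) (lawOf_nonneg hp _ _)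

lemma condProdLaw_pos (hp : ∀ ω, 0 ≤ p ω) {X : Ω → α} {Y : Ω → β} {W : Ω → γ}
    {t : α × β × γ} (h : 0 < lawOf p (fun ω => (X ω, Y ω, W ω)) t) :
    0 < condProdLaw p X Y W t :=
  div_pos (mul_pos (lawOf_comp_pos hp (fun t => (t.1, t.2.2)) h)
    (lawOf_comp_pos hp (fun t => (t.2.1, t.2.2)) h)) (lawOf_comp_pos hp (fun t => t.2.2) h)

lemma sum_condProdLaw [Fintype α] [Fintype β] [Fintype γ] (p : Ω → ℝ) (X : Ω → α) (Y : Ω → β)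
    (W : Ω → γ) : ∑ t, condProdLaw p X Y W t = ∑ ω, p ω := by
  have hW : ∀ w, ∑ x, ∑ y, condProdLaw p X Y W (x, y, w) = lawOf p W w := fun w => by
    simp only [condProdLaw, ← Finset.sum_div, ← Finset.sum_mul_sum, sum_lawOf_pair_left,
      mul_self_div_self]
  rw [← sum_lawOf p W, ← Finset.sum_congr rfl fun w _ => hW w, Fintype.sum_prod_type_right,
    Fintype.sum_prod_type_right]
  exact Finset.sum_congr rfl fun _ _ => Finset.sum_comm

end LawOf

lemma sum_mul_log_div_nonneg {ι : Type} [Fintype ι] {a b : ι → ℝ} (ha : ∀ i, 0 ≤ a i)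
    (hb : ∀ i, 0 ≤ b i) (hab : ∀ i, 0 < a i → 0 < b i) (hsum : ∑ i, b i ≤ ∑ i, a i) :
    0 ≤ ∑ i, a i * log (a i / b i) := by
  have key : ∀ i, a i - b i ≤ a i * log (a i / b i) := fun i => by
    rcases (ha i).eq_or_lt with h0 | hpos
    · simp [← h0, hb i]
    · have := one_sub_inv_le_log_of_pos (div_pos hpos (hab i hpos))
      rw [inv_div] at this
      calc a i - b i = a i * (1 - b i / a i) := by field_simp
        _ ≤ _ := mul_le_mul_of_nonneg_left this hpos.le
  calc (0 : ℝ) ≤ ∑ i, (a i - b i) := by rw [Finset.sum_sub_distrib]; linarith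
    _ ≤ _ := Finset.sum_le_sum fun i _ => key i

section Entropy

variable {Ω α β γ : Type} [Fintype Ω] [Fintype α] [Fintype β] [Fintype γ]
  [DecidableEq α] [DecidableEq β] [DecidableEq γ] {p : Ω → ℝ}

lemma ent_comp_eq_sum (p : Ω → ℝ) (F : Ω → α) (g : α → β) :
    ent p (fun ω => g (F ω))
      = -∑ a, lawOf p F a * logb 2 (lawOf p (fun ω => g (F ω)) (g a)) := by
  rw [sum_lawOf_mul p F (fun a => logb 2 (lawOf p (fun ω => g (F ω)) (g a))), ent, H2,
    sum_lawOf_mul p (fun ω => g (F ω)) (fun b => logb 2 (lawOf p (fun ω => g (F ω)) b))]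

lemma ent_comp_of_injective (p : Ω → ℝ) (F : Ω → α) {g : α → β} (hg : Injective g) :
    ent p (fun ω => g (F ω)) = ent p F := by
  rw [ent_comp_eq_sum]
  simp only [lawOf_comp_of_injective p F hg]
  rfl

lemma cmi_eq_sum_mul_logb_div (hp : ∀ ω, 0 ≤ p ω) (X : Ω → α) (Y : Ω → β) (W : Ω → γ) :
    cmi p X Y W = ∑ t, lawOf p (fun ω => (X ω, Y ω, W ω)) t *
      logb 2 (lawOf p (fun ω => (X ω, Y ω, W ω)) t / condProdLaw p X Y W t) := by
  set F := fun ω => (X ω, Y ω, W ω)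
  have hXW : ent p (fun ω => (X ω, W ω))
      = -∑ t, lawOf p F t * logb 2 (lawOf p (fun ω => (X ω, W ω)) (t.1, t.2.2)) :=
    ent_comp_eq_sum p F (fun t => (t.1, t.2.2))
  have hYW : ent p (fun ω => (Y ω, W ω))
      = -∑ t, lawOf p F t * logb 2 (lawOf p (fun ω => (Y ω, W ω)) (t.2.1, t.2.2)) :=
    ent_comp_eq_sum p F (fun t => (t.2.1, t.2.2))
  have hW : ent p W = -∑ t, lawOf p F t * logb 2 (lawOf p W t.2.2) :=
    ent_comp_eq_sum p F (fun t => t.2.2)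
  rw [cmi, hXW, hYW, hW, ent, H2]
  simp only [← Finset.sum_neg_distrib, ← Finset.sum_add_distrib, ← Finset.sum_sub_distrib]
  refine Finset.sum_congr rfl fun t _ => ?_
  rcases (lawOf_nonneg hp F t).eq_or_lt with h0 | hpos
  · simp only [F] at h0 ⊢
    simp [← h0]
  have hXW_pos := lawOf_comp_pos hp (fun t => (t.1, t.2.2)) hpos
  have hYW_pos := lawOf_comp_pos hp (fun t => (t.2.1, t.2.2)) hpos
  have hW_pos := lawOf_comp_pos hp (fun t => t.2.2) hpos
  rw [logb_div hpos.ne' (condProdLaw_pos hp hpos).ne', condProdLaw,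
    logb_div (mul_pos hXW_pos hYW_pos).ne' hW_pos.ne', logb_mul hXW_pos.ne' hYW_pos.ne']
  ring

lemma cmi_nonneg (hp : ∀ ω, 0 ≤ p ω) (X : Ω → α) (Y : Ω → β) (W : Ω → γ) :
    0 ≤ cmi p X Y W := by
  rw [cmi_eq_sum_mul_logb_div hp]
  simp only [logb, ← mul_div_assoc, ← Finset.sum_div]
  refine div_nonneg (sum_mul_log_div_nonneg (lawOf_nonneg hp _) (condProdLaw_nonneg hp X Y W)
    (fun _ => condProdLaw_pos hp) ?_) (log_nonneg one_le_two)
  rw [sum_condProdLaw, sum_lawOf]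

lemma cmi_eq_zero_of_condIndep (hp : ∀ ω, 0 ≤ p ω) {X : Ω → α} {Y : Ω → β} {W : Ω → γ}
    (h : CondIndep p X Y W) : cmi p X Y W = 0 := by
  rw [cmi_eq_sum_mul_logb_div hp]
  refine Finset.sum_eq_zero fun ⟨x, y, w⟩ _ => ?_
  rcases (lawOf_nonneg hp (fun ω => (X ω, Y ω, W ω)) (x, y, w)).eq_or_lt with h0 | hpos
  · simp [← h0]
  have hW_pos : 0 < lawOf p W w := lawOf_comp_pos hp (fun t => t.2.2) hpos
  rw [condProdLaw, ← h x y w, mul_div_cancel_right₀ _ hW_pos.ne', div_self hpos.ne', logb_one,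
    mul_zero]

end Entropy

section ChainRule

variable {Ω α β γ δ : Type} [Fintype Ω] [Fintype α] [Fintype β] [Fintype γ] [Fintype δ]
  [DecidableEq α] [DecidableEq β] [DecidableEq γ] [DecidableEq δ] {p : Ω → ℝ}

lemma cmi_comm (p : Ω → ℝ) (A : Ω → α) (B : Ω → β) (W : Ω → γ) :
    cmi p A B W = cmi p B A W := by
  have h : ent p (fun ω => (B ω, A ω, W ω)) = ent p (fun ω => (A ω, B ω, W ω)) :=
    ent_comp_of_injective p (fun ω => (A ω, B ω, W ω)) (g := fun t => (t.2.1, t.1, t.2.2))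
      fun s t h => by simp_all [Prod.ext_iff]
  rw [cmi, cmi, h]
  ring

lemma cmi_pair_left (p : Ω → ℝ) (A : Ω → α) (B : Ω → β) (C : Ω → γ) (W : Ω → δ) :
    cmi p (fun ω => (A ω, B ω)) C W = cmi p A C W + cmi p B C (fun ω => (A ω, W ω)) := by
  have h₁ : ent p (fun ω => ((A ω, B ω), W ω)) = ent p (fun ω => (B ω, A ω, W ω)) :=
    ent_comp_of_injective p (fun ω => (B ω, A ω, W ω)) (g := fun t => ((t.2.1, t.1), t.2.2))
      fun s t h => by simp_all [Prod.ext_iff]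
  have h₂ : ent p (fun ω => (C ω, A ω, W ω)) = ent p (fun ω => (A ω, C ω, W ω)) :=
    ent_comp_of_injective p (fun ω => (A ω, C ω, W ω)) (g := fun t => (t.2.1, t.1, t.2.2))
      fun s t h => by simp_all [Prod.ext_iff]
  have h₃ : ent p (fun ω => ((A ω, B ω), C ω, W ω)) = ent p (fun ω => (B ω, C ω, A ω, W ω)) :=
    ent_comp_of_injective p (fun ω => (B ω, C ω, A ω, W ω))
      (g := fun t => ((t.2.2.1, t.1), t.2.1, t.2.2.2)) fun s t h => by simp_all [Prod.ext_iff]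
  simp only [cmi, h₁, h₂, h₃]
  ring

lemma cmi_pair_right (p : Ω → ℝ) (C : Ω → γ) (A : Ω → α) (B : Ω → β) (W : Ω → δ) :
    cmi p C (fun ω => (A ω, B ω)) W = cmi p C A W + cmi p C B (fun ω => (A ω, W ω)) := by
  rw [cmi_comm, cmi_pair_left, cmi_comm p A, cmi_comm p B]

lemma mi_pair_right (p : Ω → ℝ) (X : Ω → γ) (A : Ω → α) (B : Ω → β) :
    mi p X (fun ω => (A ω, B ω)) = mi p X A + cmi p X B A := by
  have h₁ : ent p (fun ω => (B ω, A ω)) = ent p (fun ω => (A ω, B ω)) :=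
    ent_comp_of_injective p (fun ω => (A ω, B ω)) (g := Prod.swap) Prod.swap_injective
  have h₂ : ent p (fun ω => (X ω, B ω, A ω)) = ent p (fun ω => (X ω, A ω, B ω)) :=
    ent_comp_of_injective p (fun ω => (X ω, A ω, B ω)) (g := Prod.map id Prod.swap)
      (injective_id.prodMap Prod.swap_injective)
  simp only [mi, cmi, h₁, h₂]
  ring

lemma mi_comp_right_of_injective (p : Ω → ℝ) (X : Ω → γ) (A : Ω → α) {g : α → β}
    (hg : Injective g) : mi p X (fun ω => g (A ω)) = mi p X A := by
  have h : ent p (fun ω => (X ω, g (A ω))) = ent p (fun ω => (X ω, A ω)) :=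
    ent_comp_of_injective p (fun ω => (X ω, A ω)) (g := Prod.map id g) (injective_id.prodMap hg)
  rw [mi, mi, ent_comp_of_injective p A hg, h]

lemma cmi_comp_left_of_injective (p : Ω → ℝ) (A : Ω → α) (C : Ω → γ) (W : Ω → δ)
    {g : α → β} (hg : Injective g) : cmi p (fun ω => g (A ω)) C W = cmi p A C W := by
  have h₁ : ent p (fun ω => (g (A ω), W ω)) = ent p (fun ω => (A ω, W ω)) :=
    ent_comp_of_injective p (fun ω => (A ω, W ω)) (g := Prod.map g id) (hg.prodMap injective_id)
  have h₂ : ent p (fun ω => (g (A ω), C ω, W ω)) = ent p (fun ω => (A ω, C ω, W ω)) :=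
    ent_comp_of_injective p (fun ω => (A ω, C ω, W ω)) (g := Prod.map g id) (hg.prodMap injective_id)
  rw [cmi, cmi, h₁, h₂]

lemma cmi_comp_cond_of_injective (p : Ω → ℝ) (A : Ω → α) (C : Ω → γ) (W : Ω → δ)
    {g : δ → β} (hg : Injective g) : cmi p A C (fun ω => g (W ω)) = cmi p A C W := by
  have hA : ent p (fun ω => (A ω, g (W ω))) = ent p (fun ω => (A ω, W ω)) :=
    ent_comp_of_injective p (fun ω => (A ω, W ω)) (g := Prod.map id g) (injective_id.prodMap hg)
  have hC : ent p (fun ω => (C ω, g (W ω))) = ent p (fun ω => (C ω, W ω)) :=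
    ent_comp_of_injective p (fun ω => (C ω, W ω)) (g := Prod.map id g) (injective_id.prodMap hg)
  have hAC : ent p (fun ω => (A ω, C ω, g (W ω))) = ent p (fun ω => (A ω, C ω, W ω)) :=
    ent_comp_of_injective p (fun ω => (A ω, C ω, W ω)) (g := Prod.map id (Prod.map id g))
      (injective_id.prodMap (injective_id.prodMap hg))
  rw [cmi, cmi, ent_comp_of_injective p W hg, hA, hC, hAC]

lemma cmi_le_cmi_pair_left (hp : ∀ ω, 0 ≤ p ω) (A : Ω → α) (B : Ω → β) (C : Ω → γ)
    (W : Ω → δ) : cmi p A C W ≤ cmi p (fun ω => (A ω, B ω)) C W := by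
  rw [cmi_pair_left]
  linarith [cmi_nonneg hp B C (fun ω => (A ω, W ω))]

lemma cmi_cond_le_cmi_pair_left (hp : ∀ ω, 0 ≤ p ω) (A : Ω → α) (B : Ω → β) (C : Ω → γ)
    (W : Ω → δ) : cmi p B C (fun ω => (A ω, W ω)) ≤ cmi p (fun ω => (A ω, B ω)) C W := by
  rw [cmi_pair_left]
  linarith [cmi_nonneg hp A C W]

lemma mi_le_mi_of_cmi_eq_zero (hp : ∀ ω, 0 ≤ p ω) {X : Ω → γ} {A : Ω → α} {B : Ω → β}
    (h : cmi p X B A = 0) : mi p X B ≤ mi p X A := by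
  have hAB := mi_pair_right p X A B
  have hBA := mi_pair_right p X B A
  have hswap : mi p X (fun ω => (B ω, A ω)) = mi p X (fun ω => (A ω, B ω)) :=
    mi_comp_right_of_injective p X (fun ω => (A ω, B ω)) (g := Prod.swap) Prod.swap_injective
  linarith [cmi_nonneg hp X A B]

end ChainRule

section Markov

variable {Ω α β γ δ ε : Type} [Fintype Ω] [Fintype α] [Fintype β] [Fintype γ] [Fintype δ]
  [Fintype ε] [DecidableEq α] [DecidableEq β] [DecidableEq γ] [DecidableEq δ] [DecidableEq ε]
  {p : Ω → ℝ} {X : Ω → α} {Y : Ω → β} {Z : Ω → γ} {U : Ω → δ} {V : Ω → ε}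

theorem mi_le_mi_of_markov (hp : ∀ ω, 0 ≤ p ω)
    (hXY : CondIndep p X Y (fun ω => (U ω, V ω)))
    (hZ : CondIndep p (fun ω => (X ω, Y ω, U ω)) Z V) :
    mi p X (fun ω => (Y ω, Z ω)) ≤ mi p X (fun ω => (U ω, V ω)) ∧ mi p X Z ≤ mi p X V := by
  have h₁ := cmi_eq_zero_of_condIndep hp hXY
  have h₂ := cmi_eq_zero_of_condIndep hp hZ
  constructor
  · have hXZ : cmi p X Z (fun ω => (Y ω, U ω, V ω)) ≤ 0 := calc
      _ = cmi p X Z (fun ω => ((Y ω, U ω), V ω)) :=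
        cmi_comp_cond_of_injective p X Z (fun ω => ((Y ω, U ω), V ω))
          (g := Equiv.prodAssoc β δ ε) (Equiv.injective _)
      _ ≤ cmi p (fun ω => ((Y ω, U ω), X ω)) Z V :=
        cmi_cond_le_cmi_pair_left hp (fun ω => (Y ω, U ω)) X Z V
      _ = 0 := by
        rw [← h₂]
        exact (cmi_comp_left_of_injective p (fun ω => ((Y ω, U ω), X ω)) Z V (g := Prod.swap)
          Prod.swap_injective).symm
    refine mi_le_mi_of_cmi_eq_zero hp (le_antisymm ?_ (cmi_nonneg hp X (fun ω => (Y ω, Z ω)) _))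
    rw [cmi_pair_right, h₁, zero_add]
    exact hXZ
  · refine mi_le_mi_of_cmi_eq_zero hp (le_antisymm ?_ (cmi_nonneg hp X Z V))
    exact h₂ ▸ cmi_le_cmi_pair_left hp X (fun ω => (Y ω, U ω)) Z V

end Markov

section LawRelabel

variable {Ω Ω' α β γ : Type} [Fintype Ω] [Fintype Ω'] [DecidableEq Ω'] [Fintype α]
  [Fintype β] [Fintype γ] [DecidableEq α] [DecidableEq β] [DecidableEq γ]

lemma mi_lawOf (p : Ω → ℝ) (e : Ω → Ω') (X : Ω' → α) (Y : Ω' → β) :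
    mi (lawOf p e) X Y = mi p (fun ω => X (e ω)) (fun ω => Y (e ω)) := by
  simp only [mi, ent, lawOf_lawOf]

lemma condIndep_lawOf_iff (p : Ω → ℝ) (e : Ω → Ω') (X : Ω' → α) (Y : Ω' → β) (W : Ω' → γ) :
    CondIndep (lawOf p e) X Y W
      ↔ CondIndep p (fun ω => X (e ω)) (fun ω => Y (e ω)) (fun ω => W (e ω)) := by
  simp only [CondIndep, lawOf_lawOf]

lemma condIndep_comp_cond (p : Ω → ℝ) (X : Ω → α) (W : Ω → γ) (g : γ → β) :
    CondIndep p X (fun ω => g (W ω)) W := by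
  intro x y w
  by_cases hy : g w = y
  · subst hy
    have hXW : lawOf p (fun ω => (X ω, g (W ω), W ω)) (x, g w, w)
        = lawOf p (fun ω => (X ω, W ω)) (x, w) :=
      lawOf_comp_of_injective p (fun ω => (X ω, W ω)) (g := fun t => (t.1, g t.2, t.2))
        (fun s t h => by simp_all [Prod.ext_iff]) (x, w)
    have hW : lawOf p (fun ω => (g (W ω), W ω)) (g w, w) = lawOf p W w :=
      lawOf_comp_of_injective p W (g := fun c => (g c, c)) (fun s t h => congrArg Prod.snd h) w
    rw [hXW, hW]
  · have hne : ∀ ω, (g (W ω), W ω) ≠ (y, w) := fun ω h => by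
      obtain ⟨hgy, hw⟩ := Prod.mk.inj h
      exact hy (hw ▸ hgy)
    have hne' : ∀ ω, (X ω, g (W ω), W ω) ≠ (x, y, w) := fun ω h => hne ω (congrArg Prod.snd h)
    rw [lawOf_eq_zero_of_forall_ne p hne, lawOf_eq_zero_of_forall_ne p hne', zero_mul, mul_zero]

end LawRelabel

/-- **Minimum communication rates.**  For any pmf `P_{XYZUV}` on finite
alphabets satisfying the Markov chains `X − (U,V) − Y` and `(X,Y,U) − V − Z`,
one has `I(X;U,V) ≥ I(X;Y,Z)` and `I(X;V) ≥ I(X;Z)`.  Consequently the choice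
`(U,V) = (Y,Z)` — the diagonal extension `q` of the target joint pmf `Q` —
satisfies both Markov chains, has `(X,Y,Z)`-marginal `Q`, and attains
`I(X;U,V) = I(X;Y,Z)` and `I(X;V) = I(X;Z)` simultaneously, so the minimum
rates over `D` are `R1 = I(X;Y,Z)` and `R2 = I(X;Z)`. -/
theorem min_communication_rates
    {𝒳 𝒴 𝒵 : Type} [Fintype 𝒳] [Fintype 𝒴] [Fintype 𝒵]
    [DecidableEq 𝒳] [DecidableEq 𝒴] [DecidableEq 𝒵]
    (Q : 𝒳 × 𝒴 × 𝒵 → ℝ) (hQ : IsPmf Q) :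
    (∀ (𝒰 𝒱 : Type) (_ : Fintype 𝒰) (_ : Fintype 𝒱)
        (_ : DecidableEq 𝒰) (_ : DecidableEq 𝒱)
        (p : 𝒳 × 𝒴 × 𝒵 × 𝒰 × 𝒱 → ℝ), IsPmf p →
      CondIndep p (fun w => w.1) (fun w => w.2.1)
        (fun w => (w.2.2.2.1, w.2.2.2.2)) →
      CondIndep p (fun w => (w.1, w.2.1, w.2.2.2.1)) (fun w => w.2.2.1)
        (fun w => w.2.2.2.2) →
      mi p (fun w => w.1) (fun w => (w.2.1, w.2.2.1))
          ≤ mi p (fun w => w.1) (fun w => (w.2.2.2.1, w.2.2.2.2)) ∧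
      mi p (fun w => w.1) (fun w => w.2.2.1)
          ≤ mi p (fun w => w.1) (fun w => w.2.2.2.2)) ∧
    (∀ q : 𝒳 × 𝒴 × 𝒵 × 𝒴 × 𝒵 → ℝ,
      (∀ w, q w = if w.2.2.2.1 = w.2.1 ∧ w.2.2.2.2 = w.2.2.1
          then Q (w.1, w.2.1, w.2.2.1) else 0) →
      IsPmf q ∧
      (∀ x y z, lawOf q (fun w => (w.1, w.2.1, w.2.2.1)) (x, y, z) = Q (x, y, z)) ∧
      CondIndep q (fun w => w.1) (fun w => w.2.1)
        (fun w => (w.2.2.2.1, w.2.2.2.2)) ∧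
      CondIndep q (fun w => (w.1, w.2.1, w.2.2.2.1)) (fun w => w.2.2.1)
        (fun w => w.2.2.2.2) ∧
      mi q (fun w => w.1) (fun w => (w.2.2.2.1, w.2.2.2.2))
        = mi Q (fun w => w.1) (fun w => (w.2.1, w.2.2)) ∧
      mi q (fun w => w.1) (fun w => w.2.2.2.2)
        = mi Q (fun w => w.1) (fun w => w.2.2)) := by
  refine ⟨fun 𝒰 𝒱 _ _ _ _ p hp hXY hZ => mi_le_mi_of_markov hp.1 hXY hZ, fun q hq => ?_⟩
  set e : 𝒳 × 𝒴 × 𝒵 → 𝒳 × 𝒴 × 𝒵 × 𝒴 × 𝒵 := fun a => (a.1, a.2.1, a.2.2, a.2.1, a.2.2)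
  have he : Injective e := fun a b h => by simp_all [e, Prod.ext_iff]
  obtain rfl : q = lawOf Q e := eq_lawOf_of_injective he (fun a => by simp [hq, e])
    fun ⟨x, y, z, u, v⟩ h => by
      rw [hq, if_neg]
      rintro ⟨hu, hv⟩
      exact h ⟨(x, y, z), by simp_all [e]⟩
  simp only [condIndep_lawOf_iff, mi_lawOf, lawOf_lawOf]
  exact ⟨hQ.lawOf e, fun x y z => lawOf_apply_of_injective Q injective_id (x, y, z),
    condIndep_comp_cond Q _ _ Prod.fst, condIndep_comp_cond Q _ _ id, rfl, rfl⟩
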